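/- Let s, v₁, …, v_a, t be a shortest s–t path in the exchange graph G(S) for S ∈ I₁ ∩ I₂. Then S + v₁ − v₂ + v₃ − ⋯ − v_{a−1} + v_a ∈ I₁ ∩ I₂; i.e., augmenting along a shortest augmenting path preserves common independence and increases the size by one. -/

import Mathlib

/-!
Write the shortest path as `s, v₁, …, v_a, t`. Its `M₁`-arcs are `s → v₁` and `v_{2i} → v_{2i+1}`,
so `S + v₁` and `S − v_{2i} + v_{2i+1}` are `M₁`-independent. Minimality forbids every shortcut
arc, so `S + v_{2j+1}` (`j ≥ 1`) and `S − v_{2i} + v_{2j+1}` (`j > i`) are `M₁`-dependent: the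
exchanges form a triangular system. If the augmented set were dependent, take a circuit in it and
the least `j` with `v_{2j+1}` in the circuit; the rest of the circuit then lies in the closure of
`S − v_{2j}` (or of `S`), and so does `v_{2j+1}`, contradicting the arc into `v_{2j+1}`.
For `M₂`, reverse the path: it is a shortest path in the exchange graph of `(M₂, M₁)`. The size
count uses that a shortest path repeats no vertex.
-/

open Classical

noncomputable section

structure FinMatroid (α : Type*) where
  Indep : Finset α → Prop
  empty_indep : Indep ∅
  subset_indep : ∀ ⦃A B : Finset α⦄, Indep A → B ⊆ A → Indep B
  exchange : ∀ ⦃A B : Finset α⦄, Indep A → Indep B → A.card < B.card →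
    ∃ b ∈ B \ A, Indep (insert b A)

variable {α : Type*} [DecidableEq α]

/-- The rank of a set `T`: the maximum cardinality of an independent subset of `T`. -/
def FinMatroid.rank (M : FinMatroid α) (T : Finset α) : ℕ :=
  (T.powerset.filter fun A => M.Indep A).sup Finset.card

/-- Vertices of the exchange graph: a source `src`, a sink `snk`, and the ground elements. -/
inductive EGV (α : Type*) where
  | src : EGV α
  | snk : EGV α
  | el : α → EGV α

/-- Arcs of the exchange graph `G(S)` for `S ∈ I₁ ∩ I₂`. -/
def egAdj (M₁ M₂ : FinMatroid α) (S : Finset α) : EGV α → EGV α → Prop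
  | EGV.src, EGV.el b => b ∉ S ∧ M₁.Indep (insert b S)
  | EGV.el b, EGV.snk => b ∉ S ∧ M₂.Indep (insert b S)
  | EGV.el x, EGV.el y =>
      (x ∈ S ∧ y ∉ S ∧ M₁.Indep (insert y (S.erase x))) ∨
      (x ∉ S ∧ y ∈ S ∧ M₂.Indep (insert x (S.erase y)))
  | _, _ => False

/-- Directed shortest-path distance in the exchange graph (number of arcs), `⊤` if unreachable. -/
def egDist (M₁ M₂ : FinMatroid α) (S : Finset α) (u v : EGV α) : ℕ∞ :=
  sInf {n : ℕ∞ | ∃ l : List (EGV α),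
    List.Chain' (egAdj M₁ M₂ S) (u :: (l ++ [v])) ∧ n = (l.length : ℕ∞) + 1}

/-- Elements at odd positions (1-indexed) of a list: `v₁, v₃, …` — these are the elements
added by an augmentation. -/
def oddElems (l : List α) : Finset α :=
  ((((List.range l.length).zip l).filter fun p => p.1 % 2 == 0).map Prod.snd).toFinset

/-- Elements at even positions (1-indexed) of a list: `v₂, v₄, …` — these are the elements
removed by an augmentation. -/
def evenElems (l : List α) : Finset α :=
  ((((List.range l.length).zip l).filter fun p => p.1 % 2 == 1).map Prod.snd).toFinset

namespace Matroid

theorem Indep.union_image_indep_of_triangular {α ι : Type*} [LinearOrder ι] {M : Matroid α}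
    {T : Set α} {s : Finset ι} {y : ι → α} {X : ι → Set α} (hT : M.Indep T)
    (hTX : ∀ i ∈ s, T ⊆ X i) (hyX : ∀ i ∈ s, y i ∉ X i)
    (hind : ∀ i ∈ s, M.Indep (insert (y i) (X i)))
    (hdep : ∀ i ∈ s, ∀ j ∈ s, i < j → ¬ M.Indep (insert (y j) (X i))) :
    M.Indep (T ∪ y '' s) := by
  by_contra hdepJ
  have hyE : ∀ i ∈ s, y i ∈ M.E := fun i hi => (hind i hi).subset_ground (Set.mem_insert _ _)
  have hJE : T ∪ y '' s ⊆ M.E :=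
    Set.union_subset hT.subset_ground (by rintro _ ⟨i, hi, rfl⟩; exact hyE i hi)
  obtain ⟨C, hCJ, hC⟩ := ((M.not_indep_iff hJE).1 hdepJ).exists_isCircuit_subset
  have hmeets : (s.filter (y · ∈ C)).Nonempty := by
    by_contra! hempty
    refine hC.not_indep (hT.subset fun c hc => ?_)
    obtain hcT | ⟨i, hi, rfl⟩ := hCJ hc
    · exact hcT
    · exact absurd hempty (Finset.nonempty_iff_ne_empty.1 ⟨i, Finset.mem_filter.2 ⟨hi, hc⟩⟩)
  obtain ⟨ht, hytC⟩ := Finset.mem_filter.1 ((s.filter (y · ∈ C)).min'_mem hmeets)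
  set t := (s.filter (y · ∈ C)).min' hmeets
  have hXt : M.Indep (X t) := (hind t ht).subset (Set.subset_insert _ _)
  have hspan : C \ {y t} ⊆ M.closure (X t) := by
    rintro c ⟨hcC, hcy⟩
    obtain hcT | ⟨i, hi, rfl⟩ := hCJ hcC
    · exact M.subset_closure _ hXt.subset_ground (hTX t ht hcT)
    · have hti : t < i := lt_of_le_of_ne
        ((s.filter (y · ∈ C)).min'_le i (Finset.mem_filter.2 ⟨hi, hcC⟩)) (by rintro rfl; exact hcy rfl)
      rw [hXt.mem_closure_iff]
      exact Or.inl ((M.not_indep_iff (Set.insert_subset (hyE i hi) hXt.subset_ground)).1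
        (hdep t ht i hi hti))
  have hyt : y t ∈ M.closure (X t) :=
    M.closure_subset_closure_of_subset_closure hspan (hC.mem_closure_sdiff_singleton_of_mem hytC)
  exact ((hXt.insert_indep_iff_of_notMem (hyX t ht)).1 (hind t ht)).2 hyt

end Matroid

theorem List.IsChain.not_rel_getElem_of_shortest {α : Type*} {R : α → α → Prop} {u v : α}
    {l : List α} (hl : (u :: (l ++ [v])).IsChain R)
    (hmin : ∀ l' : List α, (u :: (l' ++ [v])).IsChain R → l.length ≤ l'.length)
    {p q : ℕ} (hpq : p + 1 < q) (hq : q < (u :: (l ++ [v])).length) :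
    ¬ R (u :: (l ++ [v]))[p] (u :: (l ++ [v]))[q] := by
  intro hR
  have hsplice : u :: (l.take p ++ l.drop (q - 1) ++ [v]) =
      (u :: (l ++ [v])).take (p + 1) ++ (u :: (l ++ [v])).drop q := by
    obtain ⟨q, rfl⟩ : ∃ q', q = q' + 1 := ⟨q - 1, by omega⟩
    simp only [List.length_cons, List.length_append, List.length_nil] at hq
    simp [List.take_append_of_le_length (show p ≤ l.length by omega),
      List.drop_append_of_le_length (show q ≤ l.length by omega)]
  have hshorter : (u :: (l.take p ++ l.drop (q - 1) ++ [v])).IsChain R := by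
    rw [hsplice]
    refine (hl.take _).append (hl.drop _) ?_
    rw [List.getLast?_take, if_neg p.succ_ne_zero, Nat.add_sub_cancel, List.head?_drop,
      List.getElem?_eq_getElem (by omega), List.getElem?_eq_getElem hq, Option.some_or]
    simpa using hR
  have := hmin _ hshorter
  simp only [List.length_cons, List.length_append, List.length_nil, List.length_take,
    List.length_drop] at this hq
  omega

theorem List.mem_zip_range_length {α : Type*} {l : List α} {i : ℕ} {a : α} :
    (i, a) ∈ (List.range l.length).zip l ↔ ∃ hi : i < l.length, l[i] = a := by
  simp only [List.mem_iff_getElem, List.getElem_zip, List.getElem_range, List.length_zip,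
    List.length_range, min_self, Prod.mk.injEq]
  constructor
  · rintro ⟨j, hj, rfl, rfl⟩
    exact ⟨hj, rfl⟩
  · rintro ⟨hi, rfl⟩
    exact ⟨i, hi, rfl, rfl⟩

namespace FinMatroid

def toMatroid {α : Type*} (M : FinMatroid α) : Matroid α :=
  (IndepMatroid.ofFinset Set.univ M.Indep M.empty_indep (fun _ _ hJ hIJ => M.subset_indep hJ hIJ)
    (fun I J hI hJ hIJ => by
      obtain ⟨e, he, hi⟩ := M.exchange hI hJ hIJ
      exact ⟨e, (Finset.mem_sdiff.1 he).1, (Finset.mem_sdiff.1 he).2, hi⟩)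
    (fun _ _ => Set.subset_univ _)).matroid

@[simp]
theorem toMatroid_indep_coe {α : Type*} {M : FinMatroid α} {I : Finset α} :
    M.toMatroid.Indep I ↔ M.Indep I := by
  simp [toMatroid]

theorem toMatroid_indep_insert_coe {M : FinMatroid α} {a : α} {I : Finset α} :
    M.toMatroid.Indep (insert a (I : Set α)) ↔ M.Indep (insert a I) := by
  rw [← Finset.coe_insert, toMatroid_indep_coe]

theorem indep_union_image_of_triangular {ι : Type*} [LinearOrder ι] {M : FinMatroid α}
    {T : Finset α} {s : Finset ι} {y : ι → α} {X : ι → Finset α} (hT : M.Indep T)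
    (hTX : ∀ i ∈ s, T ⊆ X i) (hyX : ∀ i ∈ s, y i ∉ X i)
    (hind : ∀ i ∈ s, M.Indep (insert (y i) (X i)))
    (hdep : ∀ i ∈ s, ∀ j ∈ s, i < j → ¬ M.Indep (insert (y j) (X i))) :
    M.Indep (T ∪ s.image y) := by
  have key := Matroid.Indep.union_image_indep_of_triangular (M := M.toMatroid)
    (X := fun i => (X i : Set α)) (toMatroid_indep_coe.2 hT)
    (fun i hi => Finset.coe_subset.2 (hTX i hi)) hyX
    (fun i hi => toMatroid_indep_insert_coe.2 (hind i hi))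
    (fun i hi j hj hij => mt toMatroid_indep_insert_coe.1 (hdep i hi j hj hij))
  rwa [← Finset.coe_image, ← Finset.coe_union, toMatroid_indep_coe] at key

end FinMatroid

theorem mem_oddElems {l : List α} {a : α} :
    a ∈ oddElems l ↔ ∃ i, i % 2 = 0 ∧ ∃ hi : i < l.length, l[i] = a := by
  simp [oddElems, List.mem_zip_range_length, and_comm]

theorem mem_evenElems {l : List α} {a : α} :
    a ∈ evenElems l ↔ ∃ i, i % 2 = 1 ∧ ∃ hi : i < l.length, l[i] = a := by
  simp [evenElems, List.mem_zip_range_length, and_comm]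

theorem oddElems_reverse {l : List α} (hl : l.length % 2 = 1) :
    oddElems l.reverse = oddElems l := by
  ext a
  simp only [mem_oddElems, List.length_reverse, List.getElem_reverse]
  constructor <;> rintro ⟨i, hpar, hi, rfl⟩
  · exact ⟨l.length - 1 - i, by omega, by omega, rfl⟩
  · exact ⟨l.length - 1 - i, by omega, by omega, by simp [Nat.sub_sub_self (by omega : i ≤ l.length - 1)]⟩

theorem evenElems_reverse {l : List α} (hl : l.length % 2 = 1) :
    evenElems l.reverse = evenElems l := by
  ext a
  simp only [mem_evenElems, List.length_reverse, List.getElem_reverse]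
  constructor <;> rintro ⟨i, hpar, hi, rfl⟩
  · exact ⟨l.length - 1 - i, by omega, by omega, rfl⟩
  · exact ⟨l.length - 1 - i, by omega, by omega, by simp [Nat.sub_sub_self (by omega : i ≤ l.length - 1)]⟩

theorem oddElems_eq_image {l : List α} {k : ℕ} (hk : l.length = 2 * k + 1) :
    oddElems l = Finset.univ.image fun i : Fin (k + 1) => l[2 * (i : ℕ)] := by
  ext a
  simp only [mem_oddElems, Finset.mem_image, Finset.mem_univ, true_and]
  constructor
  · rintro ⟨i, hpar, hi, rfl⟩
    exact ⟨⟨i / 2, by omega⟩, by simp [show 2 * (i / 2) = i by omega]⟩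
  · rintro ⟨i, rfl⟩
    exact ⟨2 * i, by omega, by omega, rfl⟩

theorem evenElems_eq_image {l : List α} {k : ℕ} (hk : l.length = 2 * k + 1) :
    evenElems l = Finset.univ.image fun i : Fin k => l[2 * (i : ℕ) + 1] := by
  ext a
  simp only [mem_evenElems, Finset.mem_image, Finset.mem_univ, true_and]
  constructor
  · rintro ⟨i, hpar, hi, rfl⟩
    exact ⟨⟨i / 2, by omega⟩, by simp [show 2 * (i / 2) + 1 = i by omega]⟩
  · rintro ⟨i, rfl⟩
    exact ⟨2 * i + 1, by omega, by omega, rfl⟩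

def EGV.swap {α : Type*} : EGV α → EGV α
  | EGV.src => EGV.snk
  | EGV.snk => EGV.src
  | EGV.el a => EGV.el a

@[simp]
theorem EGV.swap_swap {α : Type*} (u : EGV α) : u.swap.swap = u := by
  cases u <;> rfl

theorem egAdj_swap (M₁ M₂ : FinMatroid α) (S : Finset α) (u v : EGV α) :
    egAdj M₂ M₁ S v.swap u.swap ↔ egAdj M₁ M₂ S u v := by
  cases u <;> cases v <;> simp only [egAdj, EGV.swap]
  tauto

theorem isChain_egAdj_reverse_map_swap (M₁ M₂ : FinMatroid α) (S : Finset α)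
    (w : List (EGV α)) :
    (w.reverse.map EGV.swap).IsChain (egAdj M₂ M₁ S) ↔ w.IsChain (egAdj M₁ M₂ S) := by
  simp [List.isChain_map, List.isChain_reverse, egAdj_swap]

theorem egDist_swap (M₁ M₂ : FinMatroid α) (S : Finset α) (u v : EGV α) :
    egDist M₂ M₁ S v.swap u.swap = egDist M₁ M₂ S u v := by
  have reverse_walk : ∀ (M₁ M₂ : FinMatroid α) (u v : EGV α) (l : List (EGV α)),
      (u :: (l ++ [v])).IsChain (egAdj M₁ M₂ S) →
      (v.swap :: (l.reverse.map EGV.swap ++ [u.swap])).IsChain (egAdj M₂ M₁ S) :=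
    fun M₁ M₂ u v l hl => by simpa using (isChain_egAdj_reverse_map_swap M₁ M₂ S _).2 hl
  unfold egDist
  congr 1
  ext n
  constructor
  · rintro ⟨l, hl, rfl⟩
    refine ⟨l.reverse.map EGV.swap, ?_, by simp⟩
    have hl' := reverse_walk M₂ M₁ _ _ l hl
    rwa [EGV.swap_swap, EGV.swap_swap] at hl'
  · rintro ⟨l, hl, rfl⟩
    exact ⟨l.reverse.map EGV.swap, reverse_walk M₁ M₂ u v l hl, by simp⟩

def IsAugPath (M₁ M₂ : FinMatroid α) (S : Finset α) (l : List α) : Prop :=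
  (EGV.src :: (l.map EGV.el ++ [EGV.snk])).IsChain (egAdj M₁ M₂ S)

def IsShortestAugPath (M₁ M₂ : FinMatroid α) (S : Finset α) (l : List α) : Prop :=
  IsAugPath M₁ M₂ S l ∧ egDist M₁ M₂ S EGV.src EGV.snk = (l.length : ℕ∞) + 1

namespace IsAugPath

variable {M₁ M₂ : FinMatroid α} {S : Finset α} {l : List α}

theorem reverse (h : IsAugPath M₁ M₂ S l) : IsAugPath M₂ M₁ S l.reverse := by
  simpa [IsAugPath, EGV.swap, Function.comp_def] using
    (isChain_egAdj_reverse_map_swap M₁ M₂ S _).2 h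

theorem length_pos (h : IsAugPath M₁ M₂ S l) : 0 < l.length := by
  cases l with
  | nil => simp [IsAugPath, egAdj] at h
  | cons => simp

theorem egAdj_src_head (h : IsAugPath M₁ M₂ S l) (hl : 0 < l.length) :
    egAdj M₁ M₂ S EGV.src (EGV.el l[0]) := by
  simpa [hl] using h.getElem 0 (by simp)

theorem egAdj_getElem_succ (h : IsAugPath M₁ M₂ S l) (i : ℕ) (hi : i + 1 < l.length) :
    egAdj M₁ M₂ S (EGV.el l[i]) (EGV.el l[i + 1]) := by
  simpa [List.getElem_append_left, hi, show i < l.length by omega] using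
    h.getElem (i + 1) (by simp; omega)

theorem egAdj_getLast_snk (h : IsAugPath M₁ M₂ S l) (hl : 0 < l.length) :
    egAdj M₁ M₂ S (EGV.el l[l.length - 1]) EGV.snk := by
  obtain ⟨m, hm⟩ : ∃ m, l.length = m + 1 := ⟨l.length - 1, by omega⟩
  simpa [List.getElem_append_left, hm, show m < l.length by omega] using
    h.getElem (m + 1) (by simp [hm])

theorem getElem_mem_iff (h : IsAugPath M₁ M₂ S l) (i : ℕ) (hi : i < l.length) :
    l[i] ∈ S ↔ i % 2 = 1 := by
  induction i with
  | zero => simpa [egAdj] using (h.egAdj_src_head hi).1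
  | succ i ih =>
    have ih := ih (by omega)
    rcases h.egAdj_getElem_succ i hi with ⟨hin, hout, -⟩ | ⟨hout, hin, -⟩
    · simp only [hout, false_iff]; have := ih.1 hin; omega
    · simp only [hin, true_iff]; have := mt ih.2 hout; omega

theorem length_odd (h : IsAugPath M₁ M₂ S l) : l.length % 2 = 1 := by
  have hl := h.length_pos
  have := mt (h.getElem_mem_iff _ (by omega)).2 (h.egAdj_getLast_snk hl).1
  omega

theorem indep_insert_head (h : IsAugPath M₁ M₂ S l) (hl : 0 < l.length) :
    M₁.Indep (insert l[0] S) :=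
  (h.egAdj_src_head hl).2

theorem indep_insert_erase (h : IsAugPath M₁ M₂ S l) {i j : ℕ} (hi : i % 2 = 1)
    (hij : i + 1 = j) (hj : j < l.length) : M₁.Indep (insert l[j] (S.erase l[i])) := by
  subst hij
  rcases h.egAdj_getElem_succ i hj with ⟨-, -, hI⟩ | ⟨hout, -⟩
  · exact hI
  · exact absurd ((h.getElem_mem_iff i (by omega)).2 hi) hout

end IsAugPath

namespace IsShortestAugPath

variable {M₁ M₂ : FinMatroid α} {S : Finset α} {l : List α}

theorem reverse (h : IsShortestAugPath M₁ M₂ S l) : IsShortestAugPath M₂ M₁ S l.reverse :=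
  ⟨h.1.reverse, by simpa [EGV.swap] using (egDist_swap M₁ M₂ S EGV.src EGV.snk).trans h.2⟩

theorem length_le (h : IsShortestAugPath M₁ M₂ S l) (l' : List (EGV α))
    (hl' : (EGV.src :: (l' ++ [EGV.snk])).IsChain (egAdj M₁ M₂ S)) : l.length ≤ l'.length := by
  have hle : egDist M₁ M₂ S EGV.src EGV.snk ≤ (l'.length : ℕ∞) + 1 := sInf_le ⟨l', hl', rfl⟩
  rw [h.2] at hle
  have : l.length + 1 ≤ l'.length + 1 := by exact_mod_cast hle
  omega

theorem not_egAdj_src (h : IsShortestAugPath M₁ M₂ S l) {j : ℕ} (hj : 0 < j)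
    (hjl : j < l.length) : ¬ egAdj M₁ M₂ S EGV.src (EGV.el l[j]) := by
  have := h.1.not_rel_getElem_of_shortest (by simpa using h.length_le) (p := 0) (q := j + 1)
    (by omega) (by simp; omega)
  simpa [List.getElem_append_left, hjl] using this

theorem not_egAdj (h : IsShortestAugPath M₁ M₂ S l) {i j : ℕ} (hij : i + 1 < j)
    (hjl : j < l.length) : ¬ egAdj M₁ M₂ S (EGV.el l[i]) (EGV.el l[j]) := by
  have := h.1.not_rel_getElem_of_shortest (by simpa using h.length_le) (p := i + 1)
    (q := j + 1) (by omega) (by simp; omega)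
  simpa [List.getElem_append_left, hjl, show i < l.length by omega] using this

theorem nodup (h : IsShortestAugPath M₁ M₂ S l) : l.Nodup := by
  refine List.pairwise_iff_getElem.2 fun i j hi hj hij heq => ?_
  rcases Nat.eq_zero_or_pos i with rfl | hi0
  · exact h.not_egAdj_src (by omega) hj (heq ▸ h.1.egAdj_src_head hi)
  · have harc := h.1.egAdj_getElem_succ (i - 1) (by omega)
    simp only [Nat.sub_add_cancel hi0, heq] at harc
    exact h.not_egAdj (by omega) hj harc

theorem not_indep_insert (h : IsShortestAugPath M₁ M₂ S l) {j : ℕ} (hj0 : 0 < j)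
    (hj : j % 2 = 0) (hjl : j < l.length) : ¬ M₁.Indep (insert l[j] S) := fun hI =>
  h.not_egAdj_src hj0 hjl ⟨fun hjS => by have := (h.1.getElem_mem_iff j hjl).1 hjS; omega, hI⟩

theorem not_indep_insert_erase (h : IsShortestAugPath M₁ M₂ S l) {i j : ℕ} (hi : i % 2 = 1)
    (hj : j % 2 = 0) (hij : i + 1 < j) (hjl : j < l.length) :
    ¬ M₁.Indep (insert l[j] (S.erase l[i])) := fun hI =>
  h.not_egAdj hij hjl <| Or.inl ⟨(h.1.getElem_mem_iff i (by omega)).2 hi,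
    fun hjS => by have := (h.1.getElem_mem_iff j hjl).1 hjS; omega, hI⟩

theorem indep_augment (h : IsShortestAugPath M₁ M₂ S l) (hS : M₁.Indep S) :
    M₁.Indep ((S \ evenElems l) ∪ oddElems l) := by
  obtain ⟨k, hk⟩ : ∃ k, l.length = 2 * k + 1 := ⟨l.length / 2, by have := h.1.length_odd; omega⟩
  -- `X i` is `S` minus the path vertex preceding `l[2 * i]` (nothing when that vertex is `s`).
  let X : Fin (k + 1) → Finset α := fun i =>
    if i = 0 then S else S.erase l[2 * (i : ℕ) - 1]
  have hTX : ∀ i, S \ evenElems l ⊆ X i := by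
    intro i a ha
    obtain ⟨haS, haE⟩ := Finset.mem_sdiff.1 ha
    by_cases hi : i = 0
    · simpa [X, hi] using haS
    · have hi' : (i : ℕ) ≠ 0 := Fin.val_ne_zero_iff.2 hi
      simp only [X, hi, if_false, Finset.mem_erase]
      exact ⟨by rintro rfl; exact haE (mem_evenElems.2 ⟨2 * i - 1, by omega, by omega, rfl⟩), haS⟩
  have hyX : ∀ i : Fin (k + 1), l[2 * (i : ℕ)] ∉ X i := by
    intro i hy
    have hXS : X i ⊆ S := by by_cases hi : i = 0 <;> simp [X, hi, Finset.erase_subset]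
    have := (h.1.getElem_mem_iff _ _).1 (hXS hy)
    omega
  have hind : ∀ i : Fin (k + 1), M₁.Indep (insert l[2 * (i : ℕ)] (X i)) := by
    intro i
    by_cases hi : i = 0
    · simpa [X, hi] using h.1.indep_insert_head (by omega)
    · have hi' : (i : ℕ) ≠ 0 := Fin.val_ne_zero_iff.2 hi
      simpa [X, hi] using h.1.indep_insert_erase (i := 2 * i - 1) (by omega) (by omega) _
  have hdep : ∀ i j : Fin (k + 1), i < j → ¬ M₁.Indep (insert l[2 * (j : ℕ)] (X i)) := by
    intro i j hij
    have hij' : (i : ℕ) < j := hij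
    by_cases hi : i = 0
    · simpa [X, hi] using h.not_indep_insert (j := 2 * j) (by omega) (by omega) _
    · have hi' : (i : ℕ) ≠ 0 := Fin.val_ne_zero_iff.2 hi
      simpa [X, hi] using
        h.not_indep_insert_erase (i := 2 * i - 1) (j := 2 * j) (by omega) (by omega) (by omega) _
  rw [oddElems_eq_image hk]
  exact FinMatroid.indep_union_image_of_triangular (M₁.subset_indep hS Finset.sdiff_subset)
    (fun i _ => hTX i) (fun i _ => hyX i) (fun i _ => hind i) (fun i _ j _ => hdep i j)

theorem card_augment (h : IsShortestAugPath M₁ M₂ S l) :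
    ((S \ evenElems l) ∪ oddElems l).card = S.card + 1 := by
  obtain ⟨k, hk⟩ : ∃ k, l.length = 2 * k + 1 := ⟨l.length / 2, by have := h.1.length_odd; omega⟩
  have hO : (oddElems l).card = k + 1 := by
    rw [oddElems_eq_image hk, Finset.card_image_of_injective _ fun i j e =>
      Fin.ext (by have := h.nodup.getElem_inj_iff.1 e; omega), Finset.card_univ, Fintype.card_fin]
  have hE : (evenElems l).card = k := by
    rw [evenElems_eq_image hk, Finset.card_image_of_injective _ fun i j e =>
      Fin.ext (by have := h.nodup.getElem_inj_iff.1 e; omega), Finset.card_univ, Fintype.card_fin]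
  have hES : evenElems l ⊆ S := fun a ha => by
    obtain ⟨i, hi, hil, rfl⟩ := mem_evenElems.1 ha
    exact (h.1.getElem_mem_iff i hil).2 hi
  have hdisj : Disjoint (S \ evenElems l) (oddElems l) := by
    refine Finset.disjoint_left.2 fun a ha ho => ?_
    obtain ⟨i, hi, hil, rfl⟩ := mem_oddElems.1 ho
    have := (h.1.getElem_mem_iff i hil).1 (Finset.mem_sdiff.1 ha).1
    omega
  rw [Finset.card_union_of_disjoint hdisj, Finset.card_sdiff_of_subset hES, hO, hE]
  have := Finset.card_le_card hES
  omega

end IsShortestAugPath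

/-- Augmenting along a shortest augmenting path `s, v₁, …, v_a, t` in `G(S)` preserves common
independence and increases the size by one: `S + v₁ − v₂ + ⋯ + v_a ∈ I₁ ∩ I₂`. -/
theorem shortest_augmenting_path (M₁ M₂ : FinMatroid α) (S : Finset α) (l : List α)
    (hS₁ : M₁.Indep S) (hS₂ : M₂.Indep S)
    (hchain : List.Chain' (egAdj M₁ M₂ S) (EGV.src :: (l.map EGV.el ++ [EGV.snk])))
    (hshort : egDist M₁ M₂ S EGV.src EGV.snk = ((l.length : ℕ) : ℕ∞) + 1) :
    M₁.Indep ((S \ evenElems l) ∪ oddElems l) ∧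
    M₂.Indep ((S \ evenElems l) ∪ oddElems l) ∧
    ((S \ evenElems l) ∪ oddElems l).card = S.card + 1 := by
  have h : IsShortestAugPath M₁ M₂ S l := ⟨hchain, hshort⟩
  refine ⟨h.indep_augment hS₁, ?_, h.card_augment⟩
  have h₂ := h.reverse.indep_augment hS₂
  rwa [oddElems_reverse h.1.length_odd, evenElems_reverse h.1.length_odd] at h₂
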